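/- arXiv:1106.2988 — 5 statements merged into one kernel-verified Lean document; each statement's English description precedes it below -/
import Mathlib

section
/- The number of 2×2×3 arrays E = (e_{ijk}) of non-negative integers with total entry sum 6 such that in each of the three directions all parallel slices have equal entry sums is exactly 80. -/
open MvPolynomial Finset

abbrev Slc := Fin 3 × Fin 3 × Fin 3 × Fin 3

def sOK (s : Slc) : Prop := s.1.val + s.2.1.val + s.2.2.1.val + s.2.2.2.val = 2

instance : DecidablePred sOK := fun s => by unfold sOK; infer_instance

def tOK (t : {s : Slc // sOK s} × {s : Slc // sOK s} × {s : Slc // sOK s}) : Prop :=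
  (t.1.val.1.val + t.1.val.2.1.val + t.2.1.val.1.val + t.2.1.val.2.1.val
    + t.2.2.val.1.val + t.2.2.val.2.1.val = 3) ∧
  (t.1.val.1.val + t.1.val.2.2.1.val + t.2.1.val.1.val + t.2.1.val.2.2.1.val
    + t.2.2.val.1.val + t.2.2.val.2.2.1.val = 3)

instance : DecidablePred tOK := fun t => by unfold tOK; infer_instance

abbrev T := {t : {s : Slc // sOK s} × {s : Slc // sOK s} × {s : Slc // sOK s} // tOK t}

set_option maxRecDepth 10000 in
theorem cardT : Nat.card T = 80 := by
  rw [Nat.card_eq_fintype_card]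
  decide

def SetP : Set (Fin 2 → Fin 2 → Fin 3 → ℕ) :=
  {E | ((∑ i, ∑ j, ∑ k, E i j k) = 6) ∧
      ((∑ j, ∑ k, E 0 j k) = (∑ j, ∑ k, E 1 j k)) ∧
      ((∑ i, ∑ k, E i 0 k) = (∑ i, ∑ k, E i 1 k)) ∧
      ((∑ i, ∑ j, E i j 0) = (∑ i, ∑ j, E i j 1)) ∧
      ((∑ i, ∑ j, E i j 1) = (∑ i, ∑ j, E i j 2))}

theorem memP (E : Fin 2 → Fin 2 → Fin 3 → ℕ) : E ∈ SetP ↔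
    (E 0 0 0 + E 0 0 1 + E 0 0 2 + (E 0 1 0 + E 0 1 1 + E 0 1 2) +
      (E 1 0 0 + E 1 0 1 + E 1 0 2 + (E 1 1 0 + E 1 1 1 + E 1 1 2)) = 6) ∧
    (E 0 0 0 + E 0 0 1 + E 0 0 2 + (E 0 1 0 + E 0 1 1 + E 0 1 2) =
      E 1 0 0 + E 1 0 1 + E 1 0 2 + (E 1 1 0 + E 1 1 1 + E 1 1 2)) ∧
    (E 0 0 0 + E 0 0 1 + E 0 0 2 + (E 1 0 0 + E 1 0 1 + E 1 0 2) =
      E 0 1 0 + E 0 1 1 + E 0 1 2 + (E 1 1 0 + E 1 1 1 + E 1 1 2)) ∧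
    (E 0 0 0 + E 0 1 0 + (E 1 0 0 + E 1 1 0) = E 0 0 1 + E 0 1 1 + (E 1 0 1 + E 1 1 1)) ∧
    (E 0 0 1 + E 0 1 1 + (E 1 0 1 + E 1 1 1) = E 0 0 2 + E 0 1 2 + (E 1 0 2 + E 1 1 2)) := by
  simp only [SetP, Set.mem_setOf_eq, Fin.sum_univ_two, Fin.sum_univ_three]

theorem bound {E : Fin 2 → Fin 2 → Fin 3 → ℕ} (h : E ∈ SetP) :
    ∀ i j k, E i j k < 3 := by
  rw [memP] at h
  intro i j k
  fin_cases i <;> fin_cases j <;> fin_cases k <;> simp <;> omega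

def toE (t : T) : Fin 2 → Fin 2 → Fin 3 → ℕ := fun i j k =>
  (let s := match k with
    | 0 => t.val.1.val
    | 1 => t.val.2.1.val
    | 2 => t.val.2.2.val
  match i, j with
  | 0, 0 => s.1
  | 0, 1 => s.2.1
  | 1, 0 => s.2.2.1
  | 1, 1 => s.2.2.2).val

theorem toE_mem (t : T) : toE t ∈ SetP := by
  obtain ⟨⟨s0, s1, s2⟩, h1, h2⟩ := t
  have p0 := s0.prop
  have p1 := s1.prop
  have p2 := s2.prop
  unfold sOK at p0 p1 p2
  simp only at h1 h2
  rw [memP]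
  simp [toE]
  omega

def setEquiv : SetP ≃ T where
  toFun := fun ⟨E, hE⟩ =>
    have hb := bound hE
    ⟨(⟨(⟨E 0 0 0, hb 0 0 0⟩, ⟨E 0 1 0, hb 0 1 0⟩, ⟨E 1 0 0, hb 1 0 0⟩, ⟨E 1 1 0, hb 1 1 0⟩), by
        have h := (memP E).mp hE; unfold sOK; simp; omega⟩,
     ⟨(⟨E 0 0 1, hb 0 0 1⟩, ⟨E 0 1 1, hb 0 1 1⟩, ⟨E 1 0 1, hb 1 0 1⟩, ⟨E 1 1 1, hb 1 1 1⟩), by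
        have h := (memP E).mp hE; unfold sOK; simp; omega⟩,
     ⟨(⟨E 0 0 2, hb 0 0 2⟩, ⟨E 0 1 2, hb 0 1 2⟩, ⟨E 1 0 2, hb 1 0 2⟩, ⟨E 1 1 2, hb 1 1 2⟩), by
        have h := (memP E).mp hE; unfold sOK; simp; omega⟩), by
      have h := (memP E).mp hE; unfold tOK; simp; omega⟩
  invFun := fun t => ⟨toE t, toE_mem t⟩
  left_inv := fun ⟨E, hE⟩ => by
    ext i j k
    fin_cases i <;> fin_cases j <;> fin_cases k <;> rfl
  right_inv := fun t => rfl

theorem final : Set.ncard SetP = 80 := by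
  rw [← Nat.card_coe_set_eq, Nat.card_congr setEquiv, cardT]

theorem count_weight_zero_degree_six :
    Set.ncard {E : Fin 2 → Fin 2 → Fin 3 → ℕ |
      ((∑ i, ∑ j, ∑ k, E i j k) = 6) ∧
      ((∑ j, ∑ k, E 0 j k) = (∑ j, ∑ k, E 1 j k)) ∧
      ((∑ i, ∑ k, E i 0 k) = (∑ i, ∑ k, E i 1 k)) ∧
      ((∑ i, ∑ j, E i j 0) = (∑ i, ∑ j, E i j 1)) ∧
      ((∑ i, ∑ j, E i j 1) = (∑ i, ∑ j, E i j 2))} = 80 :=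
  final
end

section
/- The hyperdeterminant 𝒟 of a 2×2×3 array, the explicit 66-term homogeneous polynomial of degree 6 in variables a,…,ℓ, is annihilated by the raising operator E acting on the first index, i.e., the derivation sending a↦0, b↦0, c↦a, d↦b, e↦0, f↦0, g↦e, h↦f, i↦0, j↦0, k↦i, ℓ↦j applied to 𝒟 gives 0. -/
open MvPolynomial Finset


set_option maxHeartbeats 1600000 in
/-- The hyperdeterminant of a 2×2×3 array, a 66-term degree-6 polynomial.
Variables: a=X 0, b=X 1, c=X 2, d=X 3, e=X 4, f=X 5, g=X 6, h=X 7,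
i=X 8, j=X 9, k=X 10, ℓ=X 11, corresponding to
a=x₁₁₁, b=x₁₂₁, c=x₂₁₁, d=x₂₂₁, e=x₁₁₂, f=x₁₂₂, g=x₂₁₂, h=x₂₂₂,
i=x₁₁₃, j=x₁₂₃, k=x₂₁₃, ℓ=x₂₂₃. -/
noncomputable def hyperdet : MvPolynomial (Fin 12) ℂ :=
  let a : MvPolynomial (Fin 12) ℂ := X 0
  let b : MvPolynomial (Fin 12) ℂ := X 1
  let c : MvPolynomial (Fin 12) ℂ := X 2
  let d : MvPolynomial (Fin 12) ℂ := X 3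
  let e : MvPolynomial (Fin 12) ℂ := X 4
  let f : MvPolynomial (Fin 12) ℂ := X 5
  let g : MvPolynomial (Fin 12) ℂ := X 6
  let h : MvPolynomial (Fin 12) ℂ := X 7
  let i : MvPolynomial (Fin 12) ℂ := X 8
  let j : MvPolynomial (Fin 12) ℂ := X 9
  let k : MvPolynomial (Fin 12) ℂ := X 10
  let l : MvPolynomial (Fin 12) ℂ := X 11
  a^2*f*g*l^2 + a^2*h^2*j*k - a*d*f^2*k^2 - a*d*g^2*j^2 - b^2*e*h*k^2 - b^2*g^2*i*l
    + b*c*e^2*l^2 + b*c*h^2*i^2 - c^2*e*h*j^2 - c^2*f^2*i*l + d^2*e^2*j*k + d^2*f*g*i^2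
    - a^2*f*h*k*l - a^2*g*h*j*l - a*b*e*g*l^2 + a*b*f*h*k^2 + a*b*g^2*j*l - a*b*h^2*i*k
    - a*c*e*f*l^2 + a*c*f^2*k*l + a*c*g*h*j^2 - a*c*h^2*i*j + b^2*e*g*k*l + b^2*g*h*i*k
    - b*d*e^2*k*l + b*d*e*f*k^2 + b*d*g^2*i*j - b*d*g*h*i^2 + c^2*e*f*j*l + c^2*f*h*i*j
    - c*d*e^2*j*l + c*d*e*g*j^2 + c*d*f^2*i*k - c*d*f*h*i^2 - d^2*e*f*i*k - d^2*e*g*i*j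
    + a*b*e*h*k*l - a*b*f*g*k*l + a*b*g*h*i*l - a*b*g*h*j*k + a*d*e*f*k*l + a*d*g*h*i*j
    - b*c*e*f*k*l - b*c*g*h*i*j + c*d*e*f*i*l - c*d*e*f*j*k + c*d*e*h*i*j - c*d*f*g*i*j
    + a*c*e*h*j*l - a*c*f*g*j*l + a*c*f*h*i*l - a*c*f*h*j*k + a*d*e*g*j*l + a*d*f*h*i*k
    - b*c*e*g*j*l - b*c*f*h*i*k + b*d*e*g*i*l - b*d*e*g*j*k + b*d*e*h*i*k - b*d*f*g*i*k
    - 2*a*d*e*h*j*k - 2*a*d*f*g*i*l + 2*a*d*f*g*j*k - 2*b*c*e*h*i*l + 2*b*c*e*h*j*k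
    + 2*b*c*f*g*i*l

set_option maxHeartbeats 4000000 in
theorem hyperdet_annihilated_by_E_first_index :
    MvPolynomial.mkDerivation ℂ
      (![0, 0, X 0, X 1, 0, 0, X 4, X 5, 0, 0, X 8, X 9] : Fin 12 → MvPolynomial (Fin 12) ℂ) hyperdet = 0 := by
  have h0 : (![0, 0, X 0, X 1, 0, 0, X 4, X 5, 0, 0, X 8, X 9] : Fin 12 → MvPolynomial (Fin 12) ℂ) 0 = 0 := rfl
  have h1 : (![0, 0, X 0, X 1, 0, 0, X 4, X 5, 0, 0, X 8, X 9] : Fin 12 → MvPolynomial (Fin 12) ℂ) 1 = 0 := rfl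
  have h2 : (![0, 0, X 0, X 1, 0, 0, X 4, X 5, 0, 0, X 8, X 9] : Fin 12 → MvPolynomial (Fin 12) ℂ) 2 = X 0 := rfl
  have h3 : (![0, 0, X 0, X 1, 0, 0, X 4, X 5, 0, 0, X 8, X 9] : Fin 12 → MvPolynomial (Fin 12) ℂ) 3 = X 1 := rfl
  have h4 : (![0, 0, X 0, X 1, 0, 0, X 4, X 5, 0, 0, X 8, X 9] : Fin 12 → MvPolynomial (Fin 12) ℂ) 4 = 0 := rfl
  have h5 : (![0, 0, X 0, X 1, 0, 0, X 4, X 5, 0, 0, X 8, X 9] : Fin 12 → MvPolynomial (Fin 12) ℂ) 5 = 0 := rfl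
  have h6 : (![0, 0, X 0, X 1, 0, 0, X 4, X 5, 0, 0, X 8, X 9] : Fin 12 → MvPolynomial (Fin 12) ℂ) 6 = X 4 := rfl
  have h7 : (![0, 0, X 0, X 1, 0, 0, X 4, X 5, 0, 0, X 8, X 9] : Fin 12 → MvPolynomial (Fin 12) ℂ) 7 = X 5 := rfl
  have h8 : (![0, 0, X 0, X 1, 0, 0, X 4, X 5, 0, 0, X 8, X 9] : Fin 12 → MvPolynomial (Fin 12) ℂ) 8 = 0 := rfl
  have h9 : (![0, 0, X 0, X 1, 0, 0, X 4, X 5, 0, 0, X 8, X 9] : Fin 12 → MvPolynomial (Fin 12) ℂ) 9 = 0 := rfl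
  have h10 : (![0, 0, X 0, X 1, 0, 0, X 4, X 5, 0, 0, X 8, X 9] : Fin 12 → MvPolynomial (Fin 12) ℂ) 10 = X 8 := rfl
  have h11 : (![0, 0, X 0, X 1, 0, 0, X 4, X 5, 0, 0, X 8, X 9] : Fin 12 → MvPolynomial (Fin 12) ℂ) 11 = X 9 := rfl
  have htwo : MvPolynomial.mkDerivation ℂ
      (![0, 0, X 0, X 1, 0, 0, X 4, X 5, 0, 0, X 8, X 9] : Fin 12 → MvPolynomial (Fin 12) ℂ)
      (2 : MvPolynomial (Fin 12) ℂ) = 0 := by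
    rw [show (2 : MvPolynomial (Fin 12) ℂ) = ((2 : ℕ) : MvPolynomial (Fin 12) ℂ) by norm_num,
      Derivation.map_natCast]
  simp only [hyperdet, Derivation.leibniz, Derivation.leibniz_pow, mkDerivation_X,
    map_add, map_sub, htwo, h0, h1, h2, h3, h4, h5, h6, h7, h8, h9, h10, h11,
    smul_eq_mul, smul_zero, mul_zero, zero_mul, add_zero, zero_add]
  ring
end

section
/- The 66-term polynomial 𝒟 is annihilated by the derivation acting on the second index, i.e., the derivation sending b↦a, d↦c, f↦e, h↦g, j↦i, ℓ↦k and all of a,c,e,g,i,k to 0 applied to 𝒟 gives 0. -/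
open MvPolynomial Finset


lemma v0 : (![0, X 0, 0, X 2, 0, X 4, 0, X 6, 0, X 8, 0, X 10] : Fin 12 → MvPolynomial (Fin 12) ℂ) 0 = 0 := rfl
lemma v1 : (![0, X 0, 0, X 2, 0, X 4, 0, X 6, 0, X 8, 0, X 10] : Fin 12 → MvPolynomial (Fin 12) ℂ) 1 = X 0 := rfl
lemma v2 : (![0, X 0, 0, X 2, 0, X 4, 0, X 6, 0, X 8, 0, X 10] : Fin 12 → MvPolynomial (Fin 12) ℂ) 2 = 0 := rfl
lemma v3 : (![0, X 0, 0, X 2, 0, X 4, 0, X 6, 0, X 8, 0, X 10] : Fin 12 → MvPolynomial (Fin 12) ℂ) 3 = X 2 := rfl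
lemma v4 : (![0, X 0, 0, X 2, 0, X 4, 0, X 6, 0, X 8, 0, X 10] : Fin 12 → MvPolynomial (Fin 12) ℂ) 4 = 0 := rfl
lemma v5 : (![0, X 0, 0, X 2, 0, X 4, 0, X 6, 0, X 8, 0, X 10] : Fin 12 → MvPolynomial (Fin 12) ℂ) 5 = X 4 := rfl
lemma v6 : (![0, X 0, 0, X 2, 0, X 4, 0, X 6, 0, X 8, 0, X 10] : Fin 12 → MvPolynomial (Fin 12) ℂ) 6 = 0 := rfl
lemma v7 : (![0, X 0, 0, X 2, 0, X 4, 0, X 6, 0, X 8, 0, X 10] : Fin 12 → MvPolynomial (Fin 12) ℂ) 7 = X 6 := rfl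
lemma v8 : (![0, X 0, 0, X 2, 0, X 4, 0, X 6, 0, X 8, 0, X 10] : Fin 12 → MvPolynomial (Fin 12) ℂ) 8 = 0 := rfl
lemma v9 : (![0, X 0, 0, X 2, 0, X 4, 0, X 6, 0, X 8, 0, X 10] : Fin 12 → MvPolynomial (Fin 12) ℂ) 9 = X 8 := rfl
lemma v10 : (![0, X 0, 0, X 2, 0, X 4, 0, X 6, 0, X 8, 0, X 10] : Fin 12 → MvPolynomial (Fin 12) ℂ) 10 = 0 := rfl
lemma v11 : (![0, X 0, 0, X 2, 0, X 4, 0, X 6, 0, X 8, 0, X 10] : Fin 12 → MvPolynomial (Fin 12) ℂ) 11 = X 10 := rfl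

lemma dtwo : MvPolynomial.mkDerivation ℂ
    (![0, X 0, 0, X 2, 0, X 4, 0, X 6, 0, X 8, 0, X 10] : Fin 12 → MvPolynomial (Fin 12) ℂ) (2 : MvPolynomial (Fin 12) ℂ) = 0 := by
  rw [show (2 : MvPolynomial (Fin 12) ℂ) = ((2 : ℕ) : MvPolynomial (Fin 12) ℂ) by norm_num]
  exact Derivation.map_natCast _ 2

set_option maxHeartbeats 4000000 in
theorem hyperdet_annihilated_by_E_second_index :
    MvPolynomial.mkDerivation ℂ
      (![0, X 0, 0, X 2, 0, X 4, 0, X 6, 0, X 8, 0, X 10] : Fin 12 → MvPolynomial (Fin 12) ℂ) hyperdet = 0 := by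
  simp only [hyperdet, map_add, map_sub, Derivation.leibniz, Derivation.leibniz_pow,
    MvPolynomial.mkDerivation_X, v0, v1, v2, v3, v4, v5, v6, v7, v8, v9, v10, v11, dtwo,
    smul_eq_mul, nsmul_eq_mul, mul_zero, zero_mul, add_zero, zero_add, smul_zero, zero_smul]
  ring
end

section
/- The 66-term polynomial 𝒟 is annihilated by the derivation corresponding to the first raising operator E₁ of sl₃ acting on the third index, i.e., the derivation sending e↦a, f↦b, g↦c, h↦d and all other variables to 0 applied to 𝒟 gives 0. -/
open MvPolynomial Finset


lemma vE1_0 : (![0, 0, 0, 0, X 0, X 1, X 2, X 3, 0, 0, 0, 0] : Fin 12 → MvPolynomial (Fin 12) ℂ) 0 = 0 := rfl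
lemma vE1_1 : (![0, 0, 0, 0, X 0, X 1, X 2, X 3, 0, 0, 0, 0] : Fin 12 → MvPolynomial (Fin 12) ℂ) 1 = 0 := rfl
lemma vE1_2 : (![0, 0, 0, 0, X 0, X 1, X 2, X 3, 0, 0, 0, 0] : Fin 12 → MvPolynomial (Fin 12) ℂ) 2 = 0 := rfl
lemma vE1_3 : (![0, 0, 0, 0, X 0, X 1, X 2, X 3, 0, 0, 0, 0] : Fin 12 → MvPolynomial (Fin 12) ℂ) 3 = 0 := rfl
lemma vE1_4 : (![0, 0, 0, 0, X 0, X 1, X 2, X 3, 0, 0, 0, 0] : Fin 12 → MvPolynomial (Fin 12) ℂ) 4 = X 0 := rfl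
lemma vE1_5 : (![0, 0, 0, 0, X 0, X 1, X 2, X 3, 0, 0, 0, 0] : Fin 12 → MvPolynomial (Fin 12) ℂ) 5 = X 1 := rfl
lemma vE1_6 : (![0, 0, 0, 0, X 0, X 1, X 2, X 3, 0, 0, 0, 0] : Fin 12 → MvPolynomial (Fin 12) ℂ) 6 = X 2 := rfl
lemma vE1_7 : (![0, 0, 0, 0, X 0, X 1, X 2, X 3, 0, 0, 0, 0] : Fin 12 → MvPolynomial (Fin 12) ℂ) 7 = X 3 := rfl
lemma vE1_8 : (![0, 0, 0, 0, X 0, X 1, X 2, X 3, 0, 0, 0, 0] : Fin 12 → MvPolynomial (Fin 12) ℂ) 8 = 0 := rfl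
lemma vE1_9 : (![0, 0, 0, 0, X 0, X 1, X 2, X 3, 0, 0, 0, 0] : Fin 12 → MvPolynomial (Fin 12) ℂ) 9 = 0 := rfl
lemma vE1_10 : (![0, 0, 0, 0, X 0, X 1, X 2, X 3, 0, 0, 0, 0] : Fin 12 → MvPolynomial (Fin 12) ℂ) 10 = 0 := rfl
lemma vE1_11 : (![0, 0, 0, 0, X 0, X 1, X 2, X 3, 0, 0, 0, 0] : Fin 12 → MvPolynomial (Fin 12) ℂ) 11 = 0 := rfl

lemma dE1_two : (MvPolynomial.mkDerivation ℂ
    (![0, 0, 0, 0, X 0, X 1, X 2, X 3, 0, 0, 0, 0] : Fin 12 → MvPolynomial (Fin 12) ℂ)) 2 = 0 := by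
  rw [show (2 : MvPolynomial (Fin 12) ℂ) = 1 + 1 by norm_num]
  simp

set_option maxHeartbeats 4000000 in
theorem hyperdet_annihilated_by_E1_third_index :
    MvPolynomial.mkDerivation ℂ
      (![0, 0, 0, 0, X 0, X 1, X 2, X 3, 0, 0, 0, 0] : Fin 12 → MvPolynomial (Fin 12) ℂ) hyperdet = 0 := by
  unfold hyperdet
  simp only [map_add, map_sub, Derivation.leibniz, Derivation.leibniz_pow, mkDerivation_X,
    Matrix.cons_val_zero, Matrix.cons_val_one, Matrix.head_cons, Matrix.cons_val_fin_one,
    vE1_0, vE1_1, vE1_2, vE1_3, vE1_4, vE1_5, vE1_6, vE1_7, vE1_8, vE1_9, vE1_10, vE1_11,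
    smul_zero, zero_add, add_zero, smul_eq_mul, dE1_two]
  ring
end

section
/- The polynomial 𝒟 is invariant under cyclic permutation of the three frontal slices: the ring homomorphism sending a↦e, b↦f, c↦g, d↦h, e↦i, f↦j, g↦k, h↦ℓ, i↦a, j↦b, k↦c, ℓ↦d maps 𝒟 to 𝒟. -/
open MvPolynomial Finset


set_option maxHeartbeats 1600000 in
theorem hyperdet_invariant_cyclic_frontal_slices :
    MvPolynomial.rename
      ((![4, 5, 6, 7, 8, 9, 10, 11, 0, 1, 2, 3] : Fin 12 → Fin 12)) hyperdet = hyperdet := by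
  have h0 : (![4, 5, 6, 7, 8, 9, 10, 11, 0, 1, 2, 3] : Fin 12 → Fin 12) 0 = 4 := rfl
  have h1 : (![4, 5, 6, 7, 8, 9, 10, 11, 0, 1, 2, 3] : Fin 12 → Fin 12) 1 = 5 := rfl
  have h2 : (![4, 5, 6, 7, 8, 9, 10, 11, 0, 1, 2, 3] : Fin 12 → Fin 12) 2 = 6 := rfl
  have h3 : (![4, 5, 6, 7, 8, 9, 10, 11, 0, 1, 2, 3] : Fin 12 → Fin 12) 3 = 7 := rfl
  have h4 : (![4, 5, 6, 7, 8, 9, 10, 11, 0, 1, 2, 3] : Fin 12 → Fin 12) 4 = 8 := rfl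
  have h5 : (![4, 5, 6, 7, 8, 9, 10, 11, 0, 1, 2, 3] : Fin 12 → Fin 12) 5 = 9 := rfl
  have h6 : (![4, 5, 6, 7, 8, 9, 10, 11, 0, 1, 2, 3] : Fin 12 → Fin 12) 6 = 10 := rfl
  have h7 : (![4, 5, 6, 7, 8, 9, 10, 11, 0, 1, 2, 3] : Fin 12 → Fin 12) 7 = 11 := rfl
  have h8 : (![4, 5, 6, 7, 8, 9, 10, 11, 0, 1, 2, 3] : Fin 12 → Fin 12) 8 = 0 := rfl
  have h9 : (![4, 5, 6, 7, 8, 9, 10, 11, 0, 1, 2, 3] : Fin 12 → Fin 12) 9 = 1 := rfl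
  have h10 : (![4, 5, 6, 7, 8, 9, 10, 11, 0, 1, 2, 3] : Fin 12 → Fin 12) 10 = 2 := rfl
  have h11 : (![4, 5, 6, 7, 8, 9, 10, 11, 0, 1, 2, 3] : Fin 12 → Fin 12) 11 = 3 := rfl
  simp only [hyperdet, map_add, map_sub, map_mul, map_pow, map_ofNat, rename_X,
    h0, h1, h2, h3, h4, h5, h6, h7, h8, h9, h10, h11]
  ring
end
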